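/- arXiv:2112.07569 — 2 statements merged into one kernel-verified Lean document; each statement's English description precedes it below -/
import Mathlib

section
/- Fix a natural number S ≥ 1 and define g : (0, 1] → ℝ by g(d) = 1 − (1 − (1 − d)^{S+1}) / (d (S + 1)). Then g is strictly monotonically increasing on (0, 1]. -/
/-- **Relative improvement is strictly increasing in the reachable range `d`.**
For fixed `S ≥ 1`, the function `g(d) = 1 - (1 - (1 - d)^(S+1)) / (d (S + 1))`
is strictly monotonically increasing on `(0, 1]`. -/
theorem relative_improvement_strictMonoOn_d (S : ℕ) (hS : 1 ≤ S) :
    StrictMonoOn (fun d : ℝ => 1 - (1 - (1 - d) ^ (S + 1)) / (d * (S + 1)))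
      (Set.Ioc (0 : ℝ) 1) := by
  intro x hx y hy hxy
  have hx0 : (0:ℝ) < x := hx.1
  have hy0 : (0:ℝ) < y := hy.1
  have hn : (0:ℝ) < (S:ℝ) + 1 := by positivity
  have key : ∀ d : ℝ, 0 < d →
      (1 - (1 - d) ^ (S + 1)) / (d * ((S:ℝ) + 1))
        = (∑ k ∈ Finset.range (S+1), (1 - d)^k) / ((S:ℝ) + 1) := by
    intro d hd
    have h1 : (∑ i ∈ Finset.range (S+1), (1 - d)^i) * ((1 - d) - 1)
        = (1 - d)^(S+1) - 1 := geom_sum_mul (1 - d) (S + 1)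
    have h2 : 1 - (1 - d)^(S+1) = d * ∑ i ∈ Finset.range (S+1), (1 - d)^i := by
      nlinarith [h1]
    rw [h2]
    have hd' : d ≠ 0 := ne_of_gt hd
    push_cast
    field_simp
  simp only
  rw [key x hx0, key y hy0]
  have hsum : (∑ k ∈ Finset.range (S+1), (1 - y)^k)
      < ∑ k ∈ Finset.range (S+1), (1 - x)^k := by
    apply Finset.sum_lt_sum
    · intro i _
      exact pow_le_pow_left₀ (by linarith [hy.2]) (by linarith) i
    · refine ⟨1, Finset.mem_range.2 (by omega), by
        simpa using (by linarith : 1 - y < 1 - x)⟩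
  have hdiv : (∑ k ∈ Finset.range (S+1), (1 - y)^k) / ((S:ℝ) + 1)
      < (∑ k ∈ Finset.range (S+1), (1 - x)^k) / ((S:ℝ) + 1) := by
    gcongr
  linarith
end

section
/- Fix a real number d ∈ (0, 1) and define, for each natural number S ≥ 1, g(S) = 1 − (1 − (1 − d)^{S+1}) / (d (S + 1)). Then g is strictly monotonically increasing in S; equivalently, S ↦ (1 − (1 − d)^{S+1}) / (S + 1) is strictly decreasing in S. -/
/-!
Writing `q = 1 - d`, the geometric sum gives `1 - q ^ (S + 1) = d * ∑_{i ≤ S} q ^ i`, so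
`(1 - q ^ (S + 1)) / (S + 1)` is `d` times the mean of `1, q, …, q ^ S` and `g(S)` is one minus
that mean. Since `q ^ i` is strictly decreasing, appending the term `q ^ (S + 1)`, smaller than
all earlier ones, strictly lowers the mean.
-/

open Finset

theorem StrictAnti.average_range_succ {K : Type*} [Field K] [LinearOrder K]
    [IsStrictOrderedRing K] {a : ℕ → K} (ha : StrictAnti a) :
    StrictAnti fun n : ℕ => (∑ i ∈ range (n + 1), a i) / (n + 1) := by
  refine strictAnti_nat_of_succ_lt fun n => ?_
  have hlast : ∑ _i ∈ range (n + 1), a (n + 1) < ∑ i ∈ range (n + 1), a i :=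
    sum_lt_sum_of_nonempty nonempty_range_add_one fun i hi => ha (mem_range.1 hi)
  rw [sum_const, card_range, nsmul_eq_mul] at hlast
  rw [sum_range_succ, div_lt_div_iff₀ (by positivity) (by positivity)]
  push_cast at hlast ⊢
  linarith

/-- **Relative improvement is strictly increasing in the number of AVs `S`.**
For fixed `d ∈ (0, 1)`, the function
`g(S) = 1 - (1 - (1 - d)^(S+1)) / (d (S + 1))` is strictly monotonically
increasing on `{S : ℕ | 1 ≤ S}`; equivalently
`S ↦ (1 - (1 - d)^(S+1)) / (S + 1)` is strictly decreasing there. -/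
theorem relative_improvement_strictMonoOn_S (d : ℝ) (hd : d ∈ Set.Ioo (0 : ℝ) 1) :
    StrictMonoOn (fun S : ℕ => 1 - (1 - (1 - d) ^ (S + 1)) / (d * (S + 1)))
        (Set.Ici 1) ∧
      StrictAntiOn (fun S : ℕ => (1 - (1 - d) ^ (S + 1)) / (S + 1)) (Set.Ici 1) := by
  obtain ⟨hd0, hd1⟩ := hd
  have hmean := (pow_right_strictAnti₀ (sub_pos.2 hd1) (sub_lt_self 1 hd0)).average_range_succ
  have hgeom (S : ℕ) : 1 - (1 - d) ^ (S + 1) = d * ∑ i ∈ range (S + 1), (1 - d) ^ i := by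
    simpa only [sub_sub_cancel] using (mul_neg_geom_sum (1 - d) (S + 1)).symm
  have hanti : StrictAnti fun S : ℕ => (1 - (1 - d) ^ (S + 1)) / (S + 1) := by
    simpa only [hgeom, mul_div_assoc] using hmean.const_mul hd0
  refine ⟨fun a _ b _ hab => ?_, hanti.strictAntiOn _⟩
  simp only [hgeom, mul_div_mul_left _ _ hd0.ne']
  linarith [hmean hab]
end
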